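/- Let q > 1 be real, n ≥ 1, A, B n×n complex matrices, and μ ∈ ℂ. For w ∈ ℂ write [w]_q := (q^w − 1)/(q−1) with q^w := exp(w·ln q). Assume s₀ ∈ ℂⁿ satisfies B·s₀ = [μ]_q·s₀, that for every p ≥ 1 the matrix [p+μ]_q·I − B is invertible, and that there exists C > 0 with ‖([p+μ]_q·I − B)⁻¹‖ ≤ C for all p ≥ 1 (operator norm induced by the Euclidean norm). Define s_p := ([p+μ]_q·I − B)⁻¹·A·s_{p−1} for p ≥ 1. Then there exists r > 0 such that for every z ∈ ℂ ∖ (−∞,0] with 0 < |z| < r the series y(z) := Σ_{p≥0} s_p·z^{p+μ} (with z^{p+μ} the principal-branch complex power) converges absolutely, and for every z ∈ ℂ ∖ (−∞,0] with 0 < |z| < r/q one has (y(qz) − y(z))/(q − 1) = (z·A + B)·y(z); equivalently, z·D_q y(z) = (zA + B)·y(z), where D_q y(z) := (y(qz) − y(z))/((q−1)z) is the Jackson q-derivative. -/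

import Mathlib

/-- The Euclidean norm of a vector in `ℂⁿ`. -/
noncomputable def vecNorm {n : ℕ} (v : Fin n → ℂ) : ℝ :=
  ‖(WithLp.equiv 2 (Fin n → ℂ)).symm v‖

/-- The operator norm on `n×n` complex matrices induced by the Euclidean norm on `ℂⁿ`. -/
noncomputable def matNorm {n : ℕ} (M : Matrix (Fin n) (Fin n) ℂ) : ℝ :=
  ‖Matrix.toEuclideanCLM (𝕜 := ℂ) (n := Fin n) M‖

/-!
The bound `‖([p+μ]_q I − B)⁻¹‖ ≤ C` turns the recursion into `‖s_p‖ ≤ (C‖A‖)^p ‖s₀‖`, so the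
Floquet series is dominated by a geometric series for `|z| < 1/(C‖A‖ + 1)`. Since
`(qz)^{p+μ} − z^{p+μ} = (q−1)[p+μ]_q z^{p+μ}`, the left-hand side of the system is
`(q−1) Σ [p+μ]_q s_p z^{p+μ}`, and the recursion `[p+μ]_q s_p = B s_p + A s_{p−1}` together with
the eigenvector condition on `s₀` sums this to `(q−1)(zA + B) y(z)` after an index shift.
-/

open Matrix

section VecNorm

variable {n : ℕ}

lemma vecNorm_nonneg (v : Fin n → ℂ) : 0 ≤ vecNorm v := norm_nonneg _

lemma matNorm_nonneg (M : Matrix (Fin n) (Fin n) ℂ) : 0 ≤ matNorm M := norm_nonneg _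

lemma vecNorm_smul (c : ℂ) (v : Fin n → ℂ) : vecNorm (c • v) = ‖c‖ * vecNorm v := by
  rw [vecNorm, vecNorm, WithLp.equiv_symm_apply, WithLp.toLp_smul, norm_smul]

lemma vecNorm_mulVec_le (M : Matrix (Fin n) (Fin n) ℂ) (v : Fin n → ℂ) :
    vecNorm (M *ᵥ v) ≤ matNorm M * vecNorm v := by
  rw [vecNorm, vecNorm, matNorm, WithLp.equiv_symm_apply, ← toEuclideanCLM_toLp]
  exact (toEuclideanCLM (𝕜 := ℂ) (n := Fin n) M).le_opNorm _

lemma vecNorm_mulVec_mulVec_le {M N : Matrix (Fin n) (Fin n) ℂ} {C : ℝ} (hM : matNorm M ≤ C)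
    (v : Fin n → ℂ) : vecNorm (M *ᵥ N *ᵥ v) ≤ C * matNorm N * vecNorm v :=
  calc vecNorm (M *ᵥ N *ᵥ v) ≤ matNorm M * (matNorm N * vecNorm v) :=
        (vecNorm_mulVec_le M _).trans <|
          mul_le_mul_of_nonneg_left (vecNorm_mulVec_le N v) (matNorm_nonneg M)
    _ ≤ C * (matNorm N * vecNorm v) :=
        mul_le_mul_of_nonneg_right hM (mul_nonneg (matNorm_nonneg N) (vecNorm_nonneg v))
    _ = C * matNorm N * vecNorm v := (mul_assoc _ _ _).symm

lemma vecNorm_le_pow_mul_of_eq_mulVec_mulVec {M : ℕ → Matrix (Fin n) (Fin n) ℂ}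
    {A : Matrix (Fin n) (Fin n) ℂ} {C : ℝ} (hM : ∀ p, matNorm (M p) ≤ C) {s : ℕ → Fin n → ℂ}
    (hs : ∀ p, s (p + 1) = M p *ᵥ A *ᵥ s p) (p : ℕ) :
    vecNorm (s p) ≤ (C * matNorm A) ^ p * vecNorm (s 0) :=
  le_geom (u := fun p => vecNorm (s p))
    (mul_nonneg ((matNorm_nonneg _).trans (hM 0)) (matNorm_nonneg A)) p
    fun k _ => hs k ▸ vecNorm_mulVec_mulVec_le (hM k) (s k)

lemma Summable.of_vecNorm {β : Type*} {f : β → Fin n → ℂ}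
    (h : Summable fun p => vecNorm (f p)) : Summable f :=
  (Summable.of_norm h).map (PiLp.continuousLinearEquiv 2 ℂ (fun _ : Fin n => ℂ)).toLinearMap
    (PiLp.continuousLinearEquiv 2 ℂ (fun _ : Fin n => ℂ)).continuous

lemma summable_vecNorm_cpow_smul {K c : ℝ} (hK : 0 ≤ K) {s : ℕ → Fin n → ℂ}
    (hs : ∀ p, vecNorm (s p) ≤ K ^ p * c) {z : ℂ} (hz : z ≠ 0) (hzK : ‖z‖ * K < 1) (μ : ℂ) :
    Summable fun p : ℕ => vecNorm (z ^ ((p : ℂ) + μ) • s p) := by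
  refine ((summable_geometric_of_lt_one (by positivity) hzK).mul_left
    (‖z ^ μ‖ * c)).of_nonneg_of_le (fun p => vecNorm_nonneg _) (fun p => ?_)
  rw [vecNorm_smul, Complex.cpow_add _ _ hz, Complex.cpow_natCast, norm_mul, norm_pow]
  calc ‖z‖ ^ p * ‖z ^ μ‖ * vecNorm (s p) ≤ ‖z‖ ^ p * ‖z ^ μ‖ * (K ^ p * c) :=
        mul_le_mul_of_nonneg_left (hs p) (by positivity)
    _ = ‖z ^ μ‖ * c * (‖z‖ * K) ^ p := by ring

end VecNorm

lemma HasSum.matrix_mulVec {β ι κ R : Type*} [Fintype ι] [CommRing R] [TopologicalSpace R]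
    [IsTopologicalRing R] {f : β → ι → R} {y : ι → R} (M : Matrix κ ι R) (h : HasSum f y) :
    HasSum (fun p => M *ᵥ f p) (M *ᵥ y) :=
  h.map M.mulVecLin (Continuous.matrix_mulVec continuous_const continuous_id)

lemma smul_eq_mulVec_add_of_eq_inv_mulVec {ι R : Type*} [Fintype ι] [DecidableEq ι] [CommRing R]
    {B : Matrix ι ι R} {c : R} (h : IsUnit (c • (1 : Matrix ι ι R) - B)) {x v : ι → R}
    (hx : x = (c • (1 : Matrix ι ι R) - B)⁻¹ *ᵥ v) : c • x = B *ᵥ x + v := by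
  have hMx : (c • (1 : Matrix ι ι R) - B) *ᵥ x = v := by
    rw [hx, mulVec_mulVec, mul_nonsing_inv _ ((isUnit_iff_isUnit_det _).mp h), one_mulVec]
  rw [sub_mulVec, smul_mulVec, one_mulVec, sub_eq_iff_eq_add] at hMx
  rw [hMx, add_comm]

lemma Complex.ofReal_mul_cpow {r : ℝ} (hr : 0 < r) {z : ℂ} (hz : z ≠ 0) (w : ℂ) :
    ((r : ℂ) * z) ^ w = (r : ℂ) ^ w * z ^ w := by
  have hr' : (r : ℂ) ≠ 0 := ofReal_ne_zero.mpr hr.ne'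
  rw [cpow_def_of_ne_zero (mul_ne_zero hr' hz), cpow_def_of_ne_zero hr', cpow_def_of_ne_zero hz,
    log_ofReal_mul hr hz, add_mul, exp_add, ofReal_log hr.le]

lemma Complex.ofReal_mul_cpow_sub_cpow {q : ℝ} (hq : 1 < q) {z : ℂ} (hz : z ≠ 0) (w : ℂ) :
    ((q : ℂ) * z) ^ w - z ^ w = ((q : ℂ) - 1) * (((q : ℂ) ^ w - 1) / ((q : ℂ) - 1) * z ^ w) := by
  have hq1 : (q : ℂ) - 1 ≠ 0 := sub_ne_zero.mpr (ofReal_ne_one.mpr hq.ne')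
  rw [ofReal_mul_cpow (zero_lt_one.trans hq) hz, ← mul_assoc, mul_div_cancel₀ _ hq1]
  ring

lemma hasSum_smul_cpow_smul {ι : Type*} [Fintype ι] (A B : Matrix ι ι ℂ) {b : ℕ → ℂ}
    {s : ℕ → ι → ℂ} (h0 : b 0 • s 0 = B *ᵥ s 0)
    (hrec : ∀ p, b (p + 1) • s (p + 1) = B *ᵥ s (p + 1) + A *ᵥ s p) {μ z : ℂ} (hz : z ≠ 0)
    {y : ι → ℂ} (hy : HasSum (fun p : ℕ => z ^ ((p : ℂ) + μ) • s p) y) :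
    HasSum (fun p : ℕ => b p • z ^ ((p : ℂ) + μ) • s p) ((z • A + B) *ᵥ y) := by
  set t : ℕ → ι → ℂ := fun p => z ^ ((p : ℂ) + μ) • s p
  have hterm : ∀ p, b (p + 1) • t (p + 1) = B *ᵥ t (p + 1) + (z • A) *ᵥ t p := by
    intro p
    have hpow : z ^ (((p + 1 : ℕ) : ℂ) + μ) = z ^ ((p : ℂ) + μ) * z := by
      rw [Nat.cast_succ, add_right_comm, Complex.cpow_add _ _ hz, Complex.cpow_one]
    simp only [t, smul_comm (b _), hrec, smul_add, mulVec_smul, smul_mulVec, hpow, mul_smul]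
  have htail : HasSum (fun p => b (p + 1) • t (p + 1)) (B *ᵥ (y - t 0) + (z • A) *ᵥ y) := by
    have hshift := (hasSum_nat_add_iff' 1).mpr hy
    rw [Finset.sum_range_one] at hshift
    simp only [hterm]
    exact (hshift.matrix_mulVec B).add (hy.matrix_mulVec (z • A))
  have hhead : b 0 • t 0 = B *ᵥ t 0 := by simp only [t, smul_comm (b 0), h0, mulVec_smul]
  have hvalue : B *ᵥ (y - t 0) + (z • A) *ᵥ y = (z • A + B) *ᵥ y - b 0 • t 0 := by
    rw [hhead, add_mulVec, mulVec_sub]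
    abel
  rw [hvalue, ← Finset.sum_range_one (fun p => b p • t p)] at htail
  exact (hasSum_nat_add_iff' 1).mp htail

theorem stmt17_general (q : ℝ) (hq : 1 < q) (n : ℕ)
    (A B : Matrix (Fin n) (Fin n) ℂ) (μ : ℂ)
    (br : ℂ → ℂ) (hbr : ∀ w : ℂ, br w = ((q : ℂ) ^ w - 1) / ((q : ℂ) - 1))
    (s : ℕ → Fin n → ℂ)
    (hs0 : B.mulVec (s 0) = br μ • s 0)
    (hinv : ∀ p : ℕ, 1 ≤ p →
      IsUnit (br ((p : ℂ) + μ) • (1 : Matrix (Fin n) (Fin n) ℂ) - B))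
    (C : ℝ)
    (hbound : ∀ p : ℕ, 1 ≤ p →
      matNorm ((br ((p : ℂ) + μ) • (1 : Matrix (Fin n) (Fin n) ℂ) - B)⁻¹) ≤ C)
    (hs : ∀ p : ℕ, 1 ≤ p →
      s p = (br ((p : ℂ) + μ) • (1 : Matrix (Fin n) (Fin n) ℂ) - B)⁻¹.mulVec
        (A.mulVec (s (p - 1)))) :
    ∃ rad : ℝ, 0 < rad ∧
      (∀ z : ℂ, z ∈ Complex.slitPlane → 0 < ‖z‖ → ‖z‖ < rad →
        Summable (fun p : ℕ => vecNorm ((z ^ ((p : ℂ) + μ)) • s p))) ∧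
      (∀ z : ℂ, z ∈ Complex.slitPlane → 0 < ‖z‖ → ‖z‖ < rad / q →
        (∑' p : ℕ, (((q : ℂ) * z) ^ ((p : ℂ) + μ)) • s p) -
          (∑' p : ℕ, (z ^ ((p : ℂ) + μ)) • s p) =
        ((q : ℂ) - 1) • ((z • A + B).mulVec (∑' p : ℕ, (z ^ ((p : ℂ) + μ)) • s p))) := by
  have hq0 : 0 < q := zero_lt_one.trans hq
  set K := C * matNorm A
  have hK : 0 ≤ K := mul_nonneg ((matNorm_nonneg _).trans (hbound 1 le_rfl)) (matNorm_nonneg A)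
  have hrec : ∀ p : ℕ, br (((p + 1 : ℕ) : ℂ) + μ) • s (p + 1) = B *ᵥ s (p + 1) + A *ᵥ s p :=
    fun p => smul_eq_mulVec_add_of_eq_inv_mulVec (hinv _ p.succ_pos)
      (by rw [hs (p + 1) p.succ_pos, Nat.add_sub_cancel])
  have hgrowth : ∀ p, vecNorm (s p) ≤ K ^ p * vecNorm (s 0) :=
    vecNorm_le_pow_mul_of_eq_mulVec_mulVec (fun p => hbound _ p.succ_pos)
      (fun p => by rw [hs (p + 1) p.succ_pos, Nat.add_sub_cancel])
  have hsum : ∀ z : ℂ, z ≠ 0 → ‖z‖ < 1 / (K + 1) →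
      Summable fun p : ℕ => vecNorm (z ^ ((p : ℂ) + μ) • s p) := by
    intro z hz hzK
    rw [lt_div_iff₀ (by positivity)] at hzK
    exact summable_vecNorm_cpow_smul hK hgrowth hz (by nlinarith [norm_nonneg z]) μ
  refine ⟨1 / (K + 1), by positivity, fun z _ hz hzK => hsum z (norm_pos_iff.mp hz) hzK, ?_⟩
  intro z _ hz hzK
  have hz0 : z ≠ 0 := norm_pos_iff.mp hz
  have hqz : ‖(q : ℂ) * z‖ < 1 / (K + 1) := by
    rw [norm_mul, Complex.norm_real, Real.norm_of_nonneg hq0.le, mul_comm]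
    exact (lt_div_iff₀ hq0).mp hzK
  have hy := (Summable.of_vecNorm (hsum z hz0
    (hzK.trans_le (div_le_self (by positivity) hq.le)))).hasSum
  have hqy := Summable.of_vecNorm (hsum _ (mul_ne_zero (by exact_mod_cast hq0.ne') hz0) hqz)
  have hqdiff : ∀ p : ℕ, ((q : ℂ) * z) ^ ((p : ℂ) + μ) • s p - z ^ ((p : ℂ) + μ) • s p =
      ((q : ℂ) - 1) • br ((p : ℂ) + μ) • z ^ ((p : ℂ) + μ) • s p := by
    intro p
    rw [← sub_smul, Complex.ofReal_mul_cpow_sub_cpow hq hz0, hbr, mul_smul, mul_smul]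
  rw [← hqy.tsum_sub hy.summable, tsum_congr hqdiff, tsum_const_smul'',
    (hasSum_smul_cpow_smul A B (b := fun p : ℕ => br ((p : ℂ) + μ)) (by simpa using hs0.symm)
      hrec hz0 hy).tsum_eq]

/-- for `q > 1` and `[w]_q = (q^w − 1)/(q − 1)`, if `B·s₀ = [μ]_q·s₀`, the
matrices `[p+μ]_q·I − B` are invertible with uniformly bounded inverses, and
`s_p = ([p+μ]_q·I − B)⁻¹·A·s_{p−1}`, then there is `r > 0` such that the Floquet series
`y(z) = Σ s_p·z^{p+μ}` converges absolutely for `z` in the slit plane with `0 < |z| < r`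
and satisfies the `q`-hypergeometric system `(y(qz) − y(z))/(q−1) = (zA+B)·y(z)`,
i.e. `z·D_q y = (zA+B)·y` with `D_q` the Jackson `q`-derivative. -/
theorem stmt17 (q : ℝ) (hq : 1 < q) (n : ℕ) (hn : 1 ≤ n)
    (A B : Matrix (Fin n) (Fin n) ℂ) (μ : ℂ)
    (br : ℂ → ℂ) (hbr : ∀ w : ℂ, br w = ((q : ℂ) ^ w - 1) / ((q : ℂ) - 1))
    (s : ℕ → Fin n → ℂ)
    (hs0 : B.mulVec (s 0) = br μ • s 0)
    (hinv : ∀ p : ℕ, 1 ≤ p →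
      IsUnit (br ((p : ℂ) + μ) • (1 : Matrix (Fin n) (Fin n) ℂ) - B))
    (C : ℝ) (hC : 0 < C)
    (hbound : ∀ p : ℕ, 1 ≤ p →
      matNorm ((br ((p : ℂ) + μ) • (1 : Matrix (Fin n) (Fin n) ℂ) - B)⁻¹) ≤ C)
    (hs : ∀ p : ℕ, 1 ≤ p →
      s p = (br ((p : ℂ) + μ) • (1 : Matrix (Fin n) (Fin n) ℂ) - B)⁻¹.mulVec
        (A.mulVec (s (p - 1)))) :
    ∃ rad : ℝ, 0 < rad ∧
      (∀ z : ℂ, z ∈ Complex.slitPlane → 0 < ‖z‖ → ‖z‖ < rad →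
        Summable (fun p : ℕ => vecNorm ((z ^ ((p : ℂ) + μ)) • s p))) ∧
      (∀ z : ℂ, z ∈ Complex.slitPlane → 0 < ‖z‖ → ‖z‖ < rad / q →
        (∑' p : ℕ, (((q : ℂ) * z) ^ ((p : ℂ) + μ)) • s p) -
          (∑' p : ℕ, (z ^ ((p : ℂ) + μ)) • s p) =
        ((q : ℂ) - 1) • ((z • A + B).mulVec (∑' p : ℕ, (z ^ ((p : ℂ) + μ)) • s p))) :=
  stmt17_general q hq n A B μ br hbr s hs0 hinv C hbound hs
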